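/- arXiv:1211.0244 — 10 statements merged into one kernel-verified Lean document; each statement's English description precedes it below -/
import Mathlib

section
/- Let F be a free (nonprincipal) ultrafilter on ℕ and let n be an element of the ultrapower ℕ* = (Filter.Germ ↑F ℕ) which is not equal to the constant germ ↑k of any natural number k. Then there exists a free ultrafilter U on ℕ such that for every set A ⊆ ℕ, A ∈ U if and only if Filter.Germ.LiftPred (· ∈ A) n holds (i.e., the germ n lies in the natural extension of A). -/
theorem stmt_0 (F : Ultrafilter ℕ) (hF : ∀ k : ℕ, F ≠ pure k)
    (n : Filter.Germ (↑F : Filter ℕ) ℕ) (hn : ∀ k : ℕ, n ≠ ↑k) :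
    ∃ U : Ultrafilter ℕ, (∀ k : ℕ, U ≠ pure k) ∧
      ∀ A : Set ℕ, A ∈ U ↔ Filter.Germ.LiftPred (· ∈ A) n := by
  induction n using Filter.Germ.inductionOn with
  | h f =>
    refine ⟨F.map f, ?_, ?_⟩
    · intro k hk
      apply hn k
      have : {x | f x = k} ∈ F := by
        have : {k} ∈ F.map f := by rw [hk]; exact Filter.singleton_mem_pure
        simpa [Ultrafilter.mem_map, Set.preimage] using this
      exact Filter.Germ.coe_eq.mpr this
    · intro A
      rw [Filter.Germ.liftPred_coe]
      exact Iff.rfl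
end

section
/- Let F be a free (nonprincipal) ultrafilter on ℕ and let n : Filter.Germ ↑F ℕ. Then there exists an additive monoid homomorphism χ : (ℕ → ZMod 2) →+ ZMod 2 such that for every x : ℕ → ZMod 2, the constant germ ↑(χ x) equals Filter.Germ.map x n (the evaluation of the nonstandard extension of x at the hypernatural n). -/
theorem stmt_3 (F : Ultrafilter ℕ) (hF : ∀ k : ℕ, F ≠ pure k)
    (n : Filter.Germ (↑F : Filter ℕ) ℕ) :
    ∃ χ : (ℕ → ZMod 2) →+ ZMod 2,
      ∀ x : ℕ → ZMod 2,
        (↑(χ x) : Filter.Germ (↑F : Filter ℕ) (ZMod 2)) = Filter.Germ.map x n := by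
  have hconst : ∀ x : ℕ → ZMod 2, ∃ c : ZMod 2,
      (↑c : Filter.Germ (↑F : Filter ℕ) (ZMod 2)) = Filter.Germ.map x n := by
    intro x
    induction n using Filter.Germ.inductionOn with
    | h g =>
      rcases (F.eventually_or (p := fun i => x (g i) = 0) (q := fun i => x (g i) = 1)).mp
        (Filter.Eventually.of_forall fun i =>
          (by decide : ∀ a : ZMod 2, a = 0 ∨ a = 1) _) with h | h
      · exact ⟨0, (Filter.Germ.coe_eq.mpr (h.mono fun i hi => hi.symm))⟩
      · exact ⟨1, (Filter.Germ.coe_eq.mpr (h.mono fun i hi => hi.symm))⟩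
  choose c hc using hconst
  have hadd : ∀ x y : ℕ → ZMod 2, c (x + y) = c x + c y := by
    intro x y
    have hmap : Filter.Germ.map (x + y) n = Filter.Germ.map x n + Filter.Germ.map y n := by
      induction n using Filter.Germ.inductionOn with
      | h g => rfl
    have : (↑(c (x + y)) : Filter.Germ (↑F : Filter ℕ) (ZMod 2)) = ↑(c x + c y) := by
      rw [hc, hmap, ← hc, ← hc]; norm_cast
    exact Filter.Germ.const_inj.mp this
  have hzero : c 0 = 0 := by
    have hmap : Filter.Germ.map (0 : ℕ → ZMod 2) n = 0 := by
      induction n using Filter.Germ.inductionOn with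
      | h g => rfl
    exact Filter.Germ.const_inj.mp (by rw [hc, hmap]; rfl)
  exact ⟨⟨⟨c, hzero⟩, hadd⟩, hc⟩
end

section
/- Let F be a free (nonprincipal) ultrafilter on ℕ, let n : Filter.Germ ↑F ℕ, and let χ : (ℕ → ZMod 2) → ZMod 2 be any function satisfying ↑(χ x) = Filter.Germ.map x n for all x : ℕ → ZMod 2. Equip ℕ → ZMod 2 with the product topology (ZMod 2 discrete). Then χ is continuous if and only if n is standard, i.e., if and only if n = ↑k for some k : ℕ. In particular, for nonstandard n the Connes character χ is discontinuous. -/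
/-- `ℕ → ZMod 2` carries the product topology with `ZMod 2` discrete (this is the
default Mathlib instance). The Connes character `χ` attached to a hypernatural `n`
is continuous iff `n` is standard. -/
theorem stmt_4 (F : Ultrafilter ℕ) (hF : ∀ k : ℕ, F ≠ pure k)
    (n : Filter.Germ (↑F : Filter ℕ) ℕ) (χ : (ℕ → ZMod 2) → ZMod 2)
    (hχ : ∀ x : ℕ → ZMod 2,
      (↑(χ x) : Filter.Germ (↑F : Filter ℕ) (ZMod 2)) = Filter.Germ.map x n) :
    Continuous χ ↔ ∃ k : ℕ, n = ↑k := by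
  constructor
  · intro hcont
    by_contra hk
    push_neg at hk
    -- pick a representative f of n
    obtain ⟨f, rfl⟩ : ∃ f : ℕ → ℕ, n = ↑f := n.inductionOn fun f => ⟨f, rfl⟩
    -- χ 0 = 0
    have h0 : χ (0 : ℕ → ZMod 2) = 0 := by
      have := hχ 0
      rw [show Filter.Germ.map (0 : ℕ → ZMod 2) (↑f) = ((0 : ZMod 2) : Filter.Germ (↑F : Filter ℕ) (ZMod 2)) from rfl] at this
      exact Filter.Germ.const_inj.mp this
    -- the preimage of {0} is open and contains 0
    have hop : IsOpen (χ ⁻¹' {0}) := hcont.isOpen_preimage _ (isOpen_discrete _)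
    rw [isOpen_pi_iff] at hop
    obtain ⟨I, u, hIu, hsub⟩ := hop (0 : ℕ → ZMod 2) (by simpa using h0)
    -- define x : 0 on I, 1 off I
    set x : ℕ → ZMod 2 := fun i => if i ∈ I then 0 else 1 with hx
    have hxmem : x ∈ (I : Set ℕ).pi u := by
      intro i hi
      simp only [hx, Finset.mem_coe.mp hi, if_pos (Finset.mem_coe.mp hi)]
      exact (hIu i (Finset.mem_coe.mp hi)).2
    have hχx0 : χ x = 0 := hsub hxmem
    -- but along F, f escapes I
    have hev : ∀ᶠ i in (F : Filter ℕ), f i ∉ I := by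
      have : ∀ k ∈ I, ∀ᶠ i in (F : Filter ℕ), f i ≠ k := by
        intro k _
        have hne : (↑f : Filter.Germ (↑F : Filter ℕ) ℕ) ≠ ↑k := hk k
        have : ¬ (f =ᶠ[(F : Filter ℕ)] fun _ => k) := fun h => hne (Filter.Germ.coe_eq.mpr h)
        have hnot : {i | f i = k} ∉ F := this
        have := (Ultrafilter.compl_mem_iff_notMem).mpr hnot
        exact this
      have := (Filter.eventually_all_finset (I := I)
        (p := fun k i => f i ≠ k)).mpr this
      filter_upwards [this] with i hi hmem
      exact hi (f i) hmem rfl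
    have hmap : Filter.Germ.map x (↑f) = ((1 : ZMod 2) : Filter.Germ (↑F : Filter ℕ) (ZMod 2)) := by
      apply Filter.Germ.coe_eq.mpr
      filter_upwards [hev] with i hi
      simp [hx, hi]
    have := hχ x
    rw [hmap] at this
    have h1 : χ x = 1 := Filter.Germ.const_inj.mp this
    rw [hχx0] at h1
    exact zero_ne_one h1
  · rintro ⟨k, rfl⟩
    have heval : ∀ x : ℕ → ZMod 2, χ x = x k := by
      intro x
      have := hχ x
      rw [show Filter.Germ.map x ((k : Filter.Germ (↑F : Filter ℕ) ℕ)) =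
        ((x k : ZMod 2) : Filter.Germ (↑F : Filter ℕ) (ZMod 2)) from rfl] at this
      exact Filter.Germ.const_inj.mp this
    have : χ = fun x => x k := funext heval
    rw [this]
    exact continuous_apply k
end

section
/- Let F be a free (nonprincipal) ultrafilter on ℕ, let n : Filter.Germ ↑F ℕ be nonstandard (n ≠ ↑k for every k : ℕ), and let χ : (ℕ → ZMod 2) → ZMod 2 be any function satisfying ↑(χ x) = Filter.Germ.map x n for all x : ℕ → ZMod 2. Equip ℕ → ZMod 2 with the Borel σ-algebra of the product topology (ZMod 2 discrete) and ZMod 2 with the discrete (full) σ-algebra. Then χ is not measurable. -/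
open MeasureTheory Filter Topology Pointwise

/-- `ℕ → ZMod 2` carries the Borel σ-algebra of the product topology (`ZMod 2`
discrete) and `ZMod 2` the full σ-algebra (these are the default Mathlib
instances). The Connes character attached to a nonstandard hypernatural `n` is
not measurable. -/
theorem stmt_5 (F : Ultrafilter ℕ) (hF : ∀ k : ℕ, F ≠ pure k)
    (n : Filter.Germ (↑F : Filter ℕ) ℕ) (hn : ∀ k : ℕ, n ≠ ↑k)
    (χ : (ℕ → ZMod 2) → ZMod 2)
    (hχ : ∀ x : ℕ → ZMod 2,
      (↑(χ x) : Filter.Germ (↑F : Filter ℕ) (ZMod 2)) = Filter.Germ.map x n) :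
    ¬ Measurable χ := by
  classical
  intro hm
  obtain ⟨f, rfl⟩ := Quotient.exists_rep n
  -- pointwise evaluation description of χ
  have hval : ∀ x : ℕ → ZMod 2, ∀ᶠ m in (F : Filter ℕ), χ x = x (f m) := fun x =>
    Filter.Germ.coe_eq.mp (hχ x)
  -- χ is additive
  have hadd : ∀ x y : ℕ → ZMod 2, χ (x + y) = χ x + χ y := by
    intro x y
    obtain ⟨m, h1, h2, h3⟩ := (((hval (x + y)).and ((hval x).and (hval y))).exists)
    simp only [Pi.add_apply] at h1
    rw [h1, h2, h3]
  have hone : χ (fun _ => 1) = 1 := (hval (fun _ => 1)).exists.choose_spec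
  -- χ kills finitely supported elements
  have hfin : ∀ (d : ℕ → ZMod 2) (s : Set ℕ), s.Finite → (∀ k ∉ s, d k = 0) →
      χ d = 0 := by
    intro d s hs hd
    have hk : ∀ k : ℕ, ∀ᶠ m in (F : Filter ℕ), f m ≠ k := by
      intro k
      rw [Ultrafilter.eventually_not]
      intro h
      exact hn k (Filter.Germ.coe_eq.mpr h)
    have hall : ∀ᶠ m in (F : Filter ℕ), ∀ k ∈ s, f m ≠ k :=
      (eventually_all_finite hs).2 fun k _ => hk k
    obtain ⟨m, h1, h2⟩ := ((hval d).and hall).exists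
    rw [h1, hd _ fun hmem => h2 _ hmem rfl]
  -- the Haar measure on the compact group ℕ → ZMod 2
  set μ : Measure (ℕ → ZMod 2) := Measure.addHaar with hμdef
  set E : Set (ℕ → ZMod 2) := χ ⁻¹' {0} with hEdef
  have hE : MeasurableSet E := hm (measurableSet_singleton 0)
  -- complement of E is a translate of E
  have hflip : ∀ x : ℕ → ZMod 2, χ ((fun _ => 1) + x) = 1 + χ x := fun x => by
    rw [hadd, hone]
  have hco : (fun x => (fun _ => (1 : ZMod 2)) + x) ⁻¹' E = Eᶜ := by
    ext x
    have h2 : ∀ a : ZMod 2, 1 + a = 0 ↔ ¬ a = 0 := by decide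
    simp only [hEdef, Set.mem_preimage, Set.mem_singleton_iff, Set.mem_compl_iff, hflip x, h2]
  have hcopm : μ Eᶜ = μ E := by
    rw [← hco, measure_preimage_add]
  -- E has positive measure
  have hpos : 0 < μ E := by
    by_contra h
    push_neg at h
    have hE0 : μ E = 0 := le_antisymm h bot_le
    have : μ Set.univ = 0 := by
      have := measure_union_le (μ := μ) E Eᶜ
      rw [Set.union_compl_self, hE0, hcopm, hE0] at this
      simpa using this
    exact (IsOpen.measure_ne_zero μ isOpen_univ Set.univ_nonempty) this
  -- Steinhaus: E - E is a neighborhood of 0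
  have hsub : E - E ∈ 𝓝 (0 : ℕ → ZMod 2) :=
    Measure.sub_mem_nhds_zero_of_addHaar_pos μ E hE hpos
  -- E - E ⊆ E
  have hEE : E - E ⊆ E := by
    rintro z ⟨a, ha, b, hb, rfl⟩
    have : χ a = χ (a - b) + χ b := by rw [← hadd]; ring_nf
    simp only [hEdef, Set.mem_preimage, Set.mem_singleton_iff] at ha hb ⊢
    rw [ha, hb, add_zero] at this
    exact this.symm
  have hEnhds : E ∈ 𝓝 (0 : ℕ → ZMod 2) := Filter.mem_of_superset hsub hEE
  rw [nhds_pi] at hEnhds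
  obtain ⟨I, hI, t, ht, hsubE⟩ := Filter.mem_pi.mp hEnhds
  -- the point equal to 0 on I and 1 elsewhere
  set x : ℕ → ZMod 2 := fun k => if k ∈ I then 0 else 1 with hxdef
  have hxE : x ∈ E := by
    apply hsubE
    intro k hk
    simp only [hxdef, if_pos hk, Pi.zero_apply]
    exact mem_of_mem_nhds (ht k)
  set d : ℕ → ZMod 2 := fun k => if k ∈ I then 1 else 0 with hddef
  have hxd : x = (fun _ => 1) + d := by
    funext k
    by_cases hk : k ∈ I <;> simp [hxdef, hddef, hk] <;> decide
  have hχx : χ x = 1 := by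
    rw [hxd, hflip, hfin d I hI (fun k hk => by simp [hddef, hk]), add_zero]
  have : χ x = 0 := hxE
  rw [hχx] at this
  exact one_ne_zero this
end

section
/- Let U be a free (nonprincipal) ultrafilter on ℕ. Then the set S = {x : ℕ → ZMod 2 | x⁻¹({1}) ∈ U} is not null-measurable with respect to the Haar probability measure on the compact topological group ℕ → ZMod 2 (with the product topology, ZMod 2 discrete). In particular, a free ultrafilter on ℕ yields a non-measurable subset of (ℤ/2ℤ)^ℕ. -/
open MeasureTheory
open scoped ENNReal

/-- A free ultrafilter `U` on `ℕ` yields a subset of the compact group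
`(ℤ/2ℤ)^ℕ` (with the product topology, `ZMod 2` discrete — the default Mathlib
instances) that is not null-measurable for the Haar probability measure. -/
theorem stmt_6 (U : Ultrafilter ℕ) (hU : ∀ k : ℕ, U ≠ pure k)
    (μ : Measure (ℕ → ZMod 2)) [μ.IsAddHaarMeasure] [IsProbabilityMeasure μ] :
    ¬ NullMeasurableSet {x : ℕ → ZMod 2 | x ⁻¹' {1} ∈ U} μ := by
  classical
  intro hS
  set S : Set (ℕ → ZMod 2) := {x : ℕ → ZMod 2 | x ⁻¹' {1} ∈ U} with hSdef
  -- the ultrafilter is ≤ cofinite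
  have hcof : (U : Filter ℕ) ≤ Filter.cofinite := by
    rcases U.le_cofinite_or_eq_pure with h | ⟨a, ha⟩
    · exact h
    · exact absurd ha (hU a)
  -- approximate S from outside by an open set
  obtain ⟨V, hVo, hVfin, hVS⟩ := hS.exists_isOpen_symmDiff_lt (measure_ne_top μ S)
    (show (1:ℝ≥0∞)/8 ≠ 0 by norm_num)
  -- compact set inside V
  obtain ⟨K, hKV, hKc, hμVK⟩ := hVo.measurableSet.exists_isCompact_diff_lt hVfin.ne
    (show (1:ℝ≥0∞)/8 ≠ 0 by norm_num)
  -- for each point of K, a basic cylinder neighborhood inside V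
  have hx : ∀ x : {y : ℕ → ZMod 2 // y ∈ K}, ∃ I : Finset ℕ,
      {y : ℕ → ZMod 2 | ∀ i ∈ I, y i = (x : ℕ → ZMod 2) i} ⊆ V := by
    rintro ⟨x, hxK⟩
    obtain ⟨I, u, hu, hsub⟩ := (isOpen_pi_iff.mp hVo) x (hKV hxK)
    refine ⟨I, fun y hy => hsub fun i hi => ?_⟩
    have := hy i hi
    rw [this]
    exact (hu i hi).2
  choose Ix hIx using hx
  -- basic cylinders
  set B : {y : ℕ → ZMod 2 // y ∈ K} → Set (ℕ → ZMod 2) :=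
    fun x => {y : ℕ → ZMod 2 | ∀ i ∈ Ix x, y i = (x : ℕ → ZMod 2) i} with hBdef
  have hBopen : ∀ x, IsOpen (B x) := by
    intro x
    have : B x = Set.pi (↑(Ix x)) (fun i => {(x : ℕ → ZMod 2) i}) := by
      ext y; simp [hBdef, Set.mem_pi]
    rw [this]
    exact isOpen_set_pi (Ix x).finite_toSet (fun i _ => isOpen_discrete _)
  have hKcover : K ⊆ ⋃ x : {y : ℕ → ZMod 2 // y ∈ K}, B x := by
    intro y hy
    exact Set.mem_iUnion.mpr ⟨⟨y, hy⟩, fun i _ => rfl⟩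
  obtain ⟨t, ht⟩ := hKc.elim_finite_subcover B hBopen hKcover
  set C : Set (ℕ → ZMod 2) := ⋃ x ∈ t, B x with hCdef
  set F : Finset ℕ := t.biUnion Ix with hFdef
  -- the flipping element
  set g : ℕ → ZMod 2 := fun i => if i ∈ F then 0 else 1 with hgdef
  -- C is invariant under adding g
  have hCg : ∀ x : ℕ → ZMod 2, g + x ∈ C ↔ x ∈ C := by
    intro x
    have key : ∀ j : {y : ℕ → ZMod 2 // y ∈ K}, j ∈ t → (g + x ∈ B j ↔ x ∈ B j) := by
      intro j hj
      have hcoord : ∀ i ∈ Ix j, (g + x) i = x i := by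
        intro i hi
        have hiF : i ∈ F := Finset.mem_biUnion.mpr ⟨j, hj, hi⟩
        simp [hgdef, hiF]
      constructor
      · intro h i hi
        rw [← hcoord i hi]; exact h i hi
      · intro h i hi
        rw [hcoord i hi]; exact h i hi
    simp only [hCdef, Set.mem_iUnion]
    constructor
    · rintro ⟨j, hj, hmem⟩; exact ⟨j, hj, (key j hj).mp hmem⟩
    · rintro ⟨j, hj, hmem⟩; exact ⟨j, hj, (key j hj).mpr hmem⟩
  -- S is swapped with its complement by adding g
  have hFc : ((↑F : Set ℕ))ᶜ ∈ U := hcof (F.finite_toSet.compl_mem_cofinite)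
  have hSg : ∀ x : ℕ → ZMod 2, g + x ∈ S ↔ x ∉ S := by
    intro x
    have hz : ∀ a : ZMod 2, (1 + a = 1 ↔ ¬ a = 1) := by decide
    have hagree : ∀ i ∈ ((↑F : Set ℕ))ᶜ,
        (i ∈ (g + x) ⁻¹' ({1} : Set (ZMod 2)) ↔ i ∈ (x ⁻¹' ({1} : Set (ZMod 2)))ᶜ) := by
      intro i hi
      have hiF : i ∉ F := by simpa using hi
      have : g i = 1 := by simp [hgdef, hiF]
      simp only [Set.mem_preimage, Set.mem_singleton_iff, Set.mem_compl_iff, Pi.add_apply, this]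
      exact hz (x i)
    have hiff : (g + x) ⁻¹' ({1} : Set (ZMod 2)) ∈ U ↔
        (x ⁻¹' ({1} : Set (ZMod 2)))ᶜ ∈ U := by
      constructor
      · intro h
        refine Filter.mem_of_superset (Filter.inter_mem h hFc) ?_
        rintro i ⟨h1, h2⟩
        exact (hagree i h2).mp h1
      · intro h
        refine Filter.mem_of_superset (Filter.inter_mem h hFc) ?_
        rintro i ⟨h1, h2⟩
        exact (hagree i h2).mpr h1
    simp only [hSdef, Set.mem_setOf_eq]
    rw [hiff, Ultrafilter.compl_mem_iff_notMem]
  -- preimage of C ∆ S under (g + ·) is C ∆ Sᶜ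
  have hpre : (fun x => g + x) ⁻¹' (symmDiff C S) = symmDiff C Sᶜ := by
    ext x
    simp only [Set.mem_preimage, Set.mem_symmDiff, Set.mem_compl_iff, hCg x, hSg x]
  have hmeq : μ (symmDiff C Sᶜ) = μ (symmDiff C S) := by
    rw [← hpre]; exact measure_preimage_add μ g _
  -- the two symmetric differences cover everything
  have hcover : symmDiff C S ∪ symmDiff C Sᶜ = Set.univ := by
    ext x
    simp only [Set.mem_union, Set.mem_symmDiff, Set.mem_compl_iff, Set.mem_univ, iff_true]
    by_cases hC : x ∈ C <;> by_cases hSx : x ∈ S <;> tauto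
  -- measure bound from approximation
  have hKC : K ⊆ C := ht
  have hCV : C ⊆ V := by
    simp only [hCdef, Set.iUnion_subset_iff]
    exact fun x _ => hIx x
  have hsub2 : symmDiff C S ⊆ (symmDiff V S) ∪ (V \ K) := by
    intro x hx
    rcases Set.mem_symmDiff.mp hx with ⟨h1, h2⟩ | ⟨h1, h2⟩
    · exact Or.inl (Set.mem_symmDiff.mpr (Or.inl ⟨hCV h1, h2⟩))
    · by_cases hV : x ∈ V
      · exact Or.inr ⟨hV, fun hK => h2 (hKC hK)⟩
      · exact Or.inl (Set.mem_symmDiff.mpr (Or.inr ⟨h1, hV⟩))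
  have hsmall : μ (symmDiff C S) < 1/2 := by
    calc μ (symmDiff C S) ≤ μ ((symmDiff V S) ∪ (V \ K)) := measure_mono hsub2
      _ ≤ μ (symmDiff V S) + μ (V \ K) := measure_union_le _ _
      _ < 1/8 + 1/8 := ENNReal.add_lt_add hVS hμVK
      _ < 1/2 := by
          rw [show ((1:ℝ≥0∞)/8 + 1/8) = ENNReal.ofReal (1/8 + 1/8) by
                rw [ENNReal.ofReal_add (by norm_num) (by norm_num),
                  ENNReal.ofReal_div_of_pos (by norm_num)]
                norm_num,
            show ((1:ℝ≥0∞)/2) = ENNReal.ofReal (1/2) by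
                rw [ENNReal.ofReal_div_of_pos (by norm_num)]; norm_num]
          exact (ENNReal.ofReal_lt_ofReal_iff (by norm_num)).mpr (by norm_num)
  have hone : (1 : ℝ≥0∞) ≤ μ (symmDiff C S) + μ (symmDiff C Sᶜ) := by
    calc (1 : ℝ≥0∞) = μ Set.univ := (measure_univ).symm
      _ = μ (symmDiff C S ∪ symmDiff C Sᶜ) := by rw [hcover]
      _ ≤ μ (symmDiff C S) + μ (symmDiff C Sᶜ) := measure_union_le _ _
  rw [hmeq] at hone
  have : (1 : ℝ≥0∞) < 1/2 + 1/2 := lt_of_le_of_lt hone (ENNReal.add_lt_add hsmall hsmall)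
  rw [ENNReal.add_halves] at this
  exact lt_irrefl _ this
end

section
/- Equip ℕ → ZMod 2 with the product topology (ZMod 2 discrete). Then for every continuous additive monoid homomorphism χ : (ℕ → ZMod 2) →+ ZMod 2 there exists a finite set s : Finset ℕ such that χ x = ∑ i ∈ s, x i for all x : ℕ → ZMod 2. (The continuous dual of the compact group (ℤ/2ℤ)^ℕ is the direct sum of countably many copies of ℤ/2ℤ: every continuous character is a finite sum of coordinate evaluations.) -/
/-- Every continuous additive homomorphism `(ℤ/2ℤ)^ℕ → ℤ/2ℤ` (product topology,
`ZMod 2` discrete — the default Mathlib instances) is a finite sum of coordinate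
evaluations. -/
theorem stmt_8 (χ : (ℕ → ZMod 2) →+ ZMod 2) (hχ : Continuous χ) :
    ∃ s : Finset ℕ, ∀ x : ℕ → ZMod 2, χ x = ∑ i ∈ s, x i := by
  have h0 : χ ⁻¹' {0} ∈ nhds (0 : ℕ → ZMod 2) := by
    have : {(0 : ZMod 2)} ∈ nhds (χ 0) := by
      rw [map_zero]
      exact (isOpen_discrete _).mem_nhds rfl
    exact hχ.continuousAt this
  rw [nhds_pi, Filter.mem_pi] at h0
  obtain ⟨I, hI, t, ht, hsub⟩ := h0
  have hvanish : ∀ z : ℕ → ZMod 2, (∀ i ∈ I, z i = 0) → χ z = 0 := by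
    intro z hz
    have : z ∈ Set.pi I t := by
      intro i hi
      rw [hz i hi]
      exact mem_of_mem_nhds (ht i)
    exact hsub this
  classical
  set s := hI.toFinset with hs
  refine ⟨s.filter (fun i => χ (Pi.single i 1) = 1), fun x => ?_⟩
  have hx : χ x = ∑ i ∈ s, x i * χ (Pi.single i 1) := by
    have hdecomp : x = (∑ i ∈ s, Pi.single i (x i)) + (x - ∑ i ∈ s, Pi.single i (x i)) := by
      ring
    have hz : χ (x - ∑ i ∈ s, Pi.single i (x i)) = 0 := by
      apply hvanish
      intro i hi
      have hi' : i ∈ s := hI.mem_toFinset.2 hi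
      simp [Finset.sum_apply, Finset.sum_pi_single, hi']
    calc χ x = χ (∑ i ∈ s, Pi.single i (x i)) + χ (x - ∑ i ∈ s, Pi.single i (x i)) := by
            rw [← map_add]; exact congrArg χ hdecomp
      _ = χ (∑ i ∈ s, Pi.single i (x i)) := by rw [hz, add_zero]
      _ = ∑ i ∈ s, χ (Pi.single i (x i)) := map_sum χ _ _
      _ = ∑ i ∈ s, x i * χ (Pi.single i 1) := by
            refine Finset.sum_congr rfl fun i _ => ?_
            have h2 : ∀ a : ZMod 2, a = 0 ∨ a = 1 := by decide
            rcases h2 (x i) with h | h <;> rw [h]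
            · simp
            · simp
  rw [hx, Finset.sum_filter]
  refine Finset.sum_congr rfl fun i _ => ?_
  have : ∀ a c : ZMod 2, a * c = if c = 1 then a else 0 := by decide
  exact this _ _
end

section
/- Let f : ℝ → ℝ and r : ℝ. Then f is continuous at r if and only if f is microcontinuous at r, i.e., if and only if for every hyperreal x : ℝ* with standard part r (Hyperreal.IsSt x r), the value of the natural extension of f at x has standard part f r (Hyperreal.IsSt (Filter.Germ.map f x) (f r)). -/
/-- A real function is continuous at `r` iff it is microcontinuous at `r`:
the natural extension `*f` sends every hyperreal infinitely close to `r` to a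
hyperreal infinitely close to `f r`. -/
theorem stmt_9 (f : ℝ → ℝ) (r : ℝ) :
    ContinuousAt f r ↔
      ∀ x : ℝ*, Hyperreal.IsSt x r → Hyperreal.IsSt (Filter.Germ.map f x) (f r) := by
  constructor
  · intro hf x hx
    exact hx.map hf
  · intro h
    by_contra hc
    rw [Metric.continuousAt_iff] at hc
    push_neg at hc
    obtain ⟨ε, hε, hδ⟩ := hc
    choose u hu1 hu2 using fun n : ℕ => hδ (1 / (n + 1)) (by positivity)
    have hur : Filter.Tendsto u Filter.atTop (nhds r) := by
      rw [Metric.tendsto_atTop]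
      intro e he
      obtain ⟨N, hN⟩ := exists_nat_gt (1 / e)
      refine ⟨N, fun n hn => lt_of_lt_of_le (hu1 n) ?_⟩
      rw [div_le_iff₀ (by positivity)]
      rw [div_lt_iff₀ he] at hN
      nlinarith [hN, (Nat.cast_le (α := ℝ)).2 hn]
    have h1 : Hyperreal.IsSt (Hyperreal.ofSeq u) r := Hyperreal.isSt_of_tendsto hur
    have h2 := h _ h1
    have h3 : Hyperreal.IsSt (Hyperreal.ofSeq (f ∘ u)) (f r) := h2
    rw [Hyperreal.isSt_ofSeq_iff_tendsto, Filter.Tendsto] at h3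
    have h4 : Metric.ball (f r) ε ∈ nhds (f r) := Metric.ball_mem_nhds _ hε
    have h5 := h3 h4
    have h6 : ∀ᶠ n in Filter.hyperfilter ℕ, (f ∘ u) n ∈ Metric.ball (f r) ε := h5
    have h7 : ∀ n, ¬ ((f ∘ u) n ∈ Metric.ball (f r) ε) := fun n hn => by
      simp only [Function.comp, Metric.mem_ball] at hn
      exact absurd hn (not_lt.2 (hu2 n))
    have hbot : (Filter.hyperfilter ℕ : Filter ℕ) = ⊥ :=
      Filter.eventually_false_iff_eq_bot.mp (h6.mono fun n hn => h7 n hn)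
    exact (Filter.hyperfilter ℕ).neBot.ne hbot
end

section
/- Let f : ℝ → ℝ be differentiable on all of ℝ. Then the mean value theorem holds on every hyperreal interval: for all hyperreals a b : ℝ* with a < b, there exists a hyperreal c : ℝ* with a < c and c < b such that (Filter.Germ.map f) b - (Filter.Germ.map f) a = (b - a) * (Filter.Germ.map (deriv f)) c. -/
/-! Choose a mean value point `ξ a b` for every real interval `(a, b)` and take `c := *ξ (a, b)`;
each required property of `c` holds coordinatewise on the set of indices where `a n < b n`,
which belongs to the ultrafilter. -/

/-- The natural extension `*f : ℝ* → ℝ*` of a real function `f : ℝ → ℝ`,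
given by `Filter.Germ.map f`. -/
noncomputable def starMap (f : ℝ → ℝ) : ℝ* → ℝ* := Filter.Germ.map f

open Filter Set

theorem exists_forall_lt_mem_Ioo_sub_eq_mul_deriv {f : ℝ → ℝ} (hf : Differentiable ℝ f) :
    ∃ ξ : ℝ → ℝ → ℝ, ∀ a b, a < b →
      ξ a b ∈ Ioo a b ∧ f b - f a = (b - a) * deriv f (ξ a b) := by
  have mvt : ∀ a b : ℝ, ∃ c, a < b → c ∈ Ioo a b ∧ f b - f a = (b - a) * deriv f c := by
    intro a b
    by_cases hab : a < b
    · obtain ⟨c, hc, hslope⟩ :=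
        exists_deriv_eq_slope f hab hf.continuous.continuousOn hf.differentiableOn
      refine ⟨c, fun _ => ⟨hc, ?_⟩⟩
      rw [hslope, mul_div_cancel₀ _ (sub_ne_zero.mpr hab.ne')]
    · exact ⟨a, fun h => absurd h hab⟩
  exact ⟨fun a b => (mvt a b).choose, fun a b => (mvt a b).choose_spec⟩

/-- The mean value theorem transfers to arbitrary hyperreal intervals for the
natural extension of an everywhere differentiable real function. -/
theorem stmt_10 (f : ℝ → ℝ) (hf : Differentiable ℝ f) :
    ∀ a b : ℝ*, a < b →
      ∃ c : ℝ*, a < c ∧ c < b ∧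
        starMap f b - starMap f a = (b - a) * starMap (deriv f) c := by
  intro a b hab
  obtain ⟨ξ, hξ⟩ := exists_forall_lt_mem_Ioo_sub_eq_mul_deriv hf
  refine ⟨Germ.map₂ ξ a b, ?_⟩
  induction a, b using Germ.inductionOn₂ with
  | h u v =>
    have hξuv := (Germ.coe_lt.mp hab).mono fun n h => hξ (u n) (v n) h
    refine ⟨Germ.coe_lt.mpr ?_, Germ.coe_lt.mpr ?_, Germ.coe_eq.mpr ?_⟩
    · exact hξuv.mono fun n h => h.1.1
    · exact hξuv.mono fun n h => h.1.2
    · exact hξuv.mono fun n h => h.2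
end

section
/- Let U be a P-point ultrafilter on ℕ. Then every infinitesimal in the ultrapower ℝ^ℕ/U is representable by a null sequence: for every u : ℕ → ℝ such that for every real ε > 0 the set {n | |u n| < ε} belongs to U, there exists v : ℕ → ℝ with v tending to 0 (Filter.Tendsto v atTop (nhds 0)) and {n | u n = v n} ∈ U. -/
/-!
Sort the terms of `u` into levels by `n ↦ ⌈|u n|⁻¹⌉₊`, and apply the P-point property to this
level map. If it is constant on a set of `U`, then, since `u` is infinitesimal, `u` vanishes on a
set of `U`. If it is finite-to-one on `A ∈ U`, then only finitely many `n ∈ A` have `|u n| ≥ ε`,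
so `u` cut off outside `A` is a null sequence that agrees with `u` on `A`.
-/

/-- A P-point: a free (nonprincipal) ultrafilter `U` on `ℕ` such that every
function `ℕ → ℕ` is constant or finite-to-one on some set of `U`. -/
def IsPPoint (U : Ultrafilter ℕ) : Prop :=
  (∀ k : ℕ, U ≠ pure k) ∧
    ∀ f : ℕ → ℕ, ∃ A ∈ U,
      (∃ k : ℕ, ∀ n ∈ A, f n = k) ∨ ∀ k : ℕ, (A ∩ f ⁻¹' {k}).Finite

open Filter Topology

/-- `invLevel 0 = 0`, because `0⁻¹ = 0` in `ℝ`. -/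
noncomputable def invLevel (x : ℝ) : ℕ := ⌈|x|⁻¹⌉₊

theorem invLevel_le_of_le_abs {x ε : ℝ} (hε : 0 < ε) (hx : ε ≤ |x|) :
    invLevel x ≤ ⌈ε⁻¹⌉₊ :=
  Nat.ceil_le_ceil (inv_anti₀ hε hx)

theorem eq_zero_of_invLevel_le {x : ℝ} {k : ℕ} (hk : invLevel x ≤ k)
    (hx : |x| < ((k : ℝ) + 1)⁻¹) : x = 0 := by
  by_contra hne
  have hpos : 0 < |x| := abs_pos.mpr hne
  have hinv : |x|⁻¹ < (k : ℝ) + 1 :=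
    calc |x|⁻¹ ≤ ⌈|x|⁻¹⌉₊ := Nat.le_ceil _
      _ ≤ k := by exact_mod_cast hk
      _ < k + 1 := lt_add_one _
  exact hx.not_ge ((inv_lt_comm₀ hpos (by positivity)).mp hinv).le

theorem eventually_eq_zero_of_invLevel_le {ι : Type*} {l : Filter ι} {u : ι → ℝ} {k : ℕ}
    (hu : ∀ ε : ℝ, 0 < ε → ∀ᶠ n in l, |u n| < ε) (hk : ∀ᶠ n in l, invLevel (u n) ≤ k) :
    ∀ᶠ n in l, u n = 0 := by
  filter_upwards [hk, hu _ (by positivity : (0 : ℝ) < ((k : ℝ) + 1)⁻¹)] with n hkn hun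
  exact eq_zero_of_invLevel_le hkn hun

theorem tendsto_zero_of_finite_setOf_le_abs {v : ℕ → ℝ}
    (hv : ∀ ε : ℝ, 0 < ε → {n | ε ≤ |v n|}.Finite) : Tendsto v atTop (𝓝 0) := by
  rw [Metric.tendsto_nhds, ← Nat.cofinite_eq_atTop]
  intro ε hε
  simpa [eventually_cofinite, Real.dist_eq] using hv ε hε

theorem tendsto_indicator_zero_of_finite_invLevel_fibers {A : Set ℕ} {u : ℕ → ℝ}
    (hA : ∀ k : ℕ, (A ∩ (fun n => invLevel (u n)) ⁻¹' {k}).Finite) :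
    Tendsto (A.indicator u) atTop (𝓝 0) := by
  refine tendsto_zero_of_finite_setOf_le_abs fun ε hε => ?_
  refine ((Set.finite_Iic ⌈ε⁻¹⌉₊).biUnion fun k _ => hA k).subset fun n hn => ?_
  have hnA : n ∈ A := by
    by_contra hnA
    simp only [Set.mem_ofPred_eq, Set.indicator_of_notMem hnA, abs_zero] at hn
    exact hn.not_gt hε
  rw [Set.mem_ofPred_eq, Set.indicator_of_mem hnA] at hn
  exact Set.mem_biUnion (Set.mem_Iic.mpr (invLevel_le_of_le_abs hε hn)) ⟨hnA, rfl⟩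

/-- If `U` is a P-point, then every infinitesimal of the ultrapower `ℝ^ℕ/U` is
representable by a sequence tending to zero. -/
theorem stmt_14 (U : Ultrafilter ℕ) (hU : IsPPoint U) (u : ℕ → ℝ)
    (hu : ∀ ε : ℝ, 0 < ε → {n : ℕ | |u n| < ε} ∈ U) :
    ∃ v : ℕ → ℝ, Filter.Tendsto v Filter.atTop (nhds 0) ∧ {n : ℕ | u n = v n} ∈ U := by
  obtain ⟨A, hA, ⟨k, hk⟩ | hfin⟩ := hU.2 fun n => invLevel (u n)
  · refine ⟨0, tendsto_const_nhds, ?_⟩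
    exact eventually_eq_zero_of_invLevel_le hu
      (mem_of_superset hA fun n hn => (hk n hn).le)
  · refine ⟨A.indicator u, tendsto_indicator_zero_of_finite_invLevel_fibers hfin, ?_⟩
    exact mem_of_superset hA fun n hn => (Set.indicator_of_mem hn u).symm
end

section
/- Assume the continuum hypothesis (Cardinal.continuum = Cardinal.aleph 1). Then there exists a P-point ultrafilter on ℕ. -/
/-!
Enumerate `ℕ → ℕ` as `(f_i)_{i < ω₁}`, which CH allows. By transfinite recursion choose infinite
sets `A_i` with `A_j \ A_i` finite for `i < j` and `f_i` constant or finite-to-one on `A_i`: at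
stage `i` only countably many sets came before, so they have an infinite pseudo-intersection
(a diagonal argument), and shrinking it to handle `f_i` is a pigeonhole step. Every ultrafilter
containing all `A_i` and no finite set is then a P-point.
-/

open Set Filter Cardinal

def ConstOrFiniteToOneOn {α β : Type*} (f : α → β) (s : Set α) : Prop :=
  (∃ b, ∀ a ∈ s, f a = b) ∨ ∀ b, (s ∩ f ⁻¹' {b}).Finite

theorem Set.Infinite.exists_subset_constOrFiniteToOneOn {α β : Type*} {C : Set α}
    (hC : C.Infinite) (f : α → β) : ∃ s ⊆ C, s.Infinite ∧ ConstOrFiniteToOneOn f s := by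
  by_cases h : ∃ b, (C ∩ f ⁻¹' {b}).Infinite
  · obtain ⟨b, hb⟩ := h
    exact ⟨C ∩ f ⁻¹' {b}, inter_subset_left, hb, Or.inl ⟨b, fun a ha => ha.2⟩⟩
  · push Not at h
    exact ⟨C, subset_rfl, hC, Or.inr h⟩

theorem Ultrafilter.ne_pure_of_le_cofinite {α : Type*} {U : Ultrafilter α}
    (hU : (U : Filter α) ≤ cofinite) (a : α) : U ≠ pure a := by
  rintro rfl
  exact le_cofinite_iff_compl_singleton_mem.1 hU a rfl

theorem exists_infinite_forall_sdiff_finite_of_antitone {B : ℕ → Set ℕ} (hB : Antitone B)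
    (hinf : ∀ n, (B n).Infinite) : ∃ C : Set ℕ, C.Infinite ∧ ∀ n, (C \ B n).Finite := by
  -- `c n ∈ B n` and `n < c n`, so `range c` is unbounded and `c n ∈ B m` whenever `m ≤ n`
  choose c hcB hc using fun n => (hinf n).exists_gt n
  refine ⟨range c, infinite_of_not_bddAbove ?_, fun m => ((finite_Iio m).image c).subset ?_⟩
  · rintro ⟨b, hb⟩
    exact (hc b).not_ge (hb (mem_range_self b))
  · rintro _ ⟨⟨n, rfl⟩, hn⟩
    exact mem_image_of_mem c (not_le.1 fun hmn => hn (hB hmn (hcB n)))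

theorem exists_infinite_forall_sdiff_finite_of_countable {σ : Type*} [Countable σ]
    {A : σ → Set ℕ} (hA : ∀ s : Finset σ, (⋂ j ∈ s, A j).Infinite) :
    ∃ C : Set ℕ, C.Infinite ∧ ∀ j, (C \ A j).Finite := by
  classical
  cases isEmpty_or_nonempty σ with
  | inl _ => exact ⟨univ, infinite_univ, isEmptyElim⟩
  | inr _ =>
    obtain ⟨g, hg⟩ := exists_surjective_nat σ
    have hB : Antitone fun n => ⋂ j ∈ (Finset.range (n + 1)).image g, A j := fun m n hmn =>
      biInter_subset_biInter_left (Finset.coe_subset.2 (Finset.image_subset_image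
        (Finset.range_subset_range.2 (Nat.succ_le_succ hmn))))
    obtain ⟨C, hC, hCB⟩ := exists_infinite_forall_sdiff_finite_of_antitone hB fun n => hA _
    refine ⟨C, hC, fun j => ?_⟩
    obtain ⟨m, rfl⟩ := hg j
    exact (hCB m).subset (sdiff_subset_sdiff_right
      (biInter_subset_of_mem (Finset.mem_image_of_mem g (Finset.self_mem_range_succ m))))

theorem Finset.infinite_biInter_of_sdiff_finite {σ : Type*} [LinearOrder σ] {A : σ → Set ℕ}
    (hinf : ∀ j, (A j).Infinite) (hA : ∀ ⦃i j⦄, i ≤ j → (A j \ A i).Finite) (s : Finset σ) :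
    (⋂ j ∈ s, A j).Infinite := by
  rcases s.eq_empty_or_nonempty with rfl | hs
  · simpa using infinite_univ
  -- all of `A (s.max' hs)` but finitely many points lies in every `A j`, `j ∈ s`
  have hfin : (⋃ j ∈ s, A (s.max' hs) \ A j).Finite :=
    s.finite_toSet.biUnion fun j hj => hA (s.le_max' j hj)
  refine ((hinf (s.max' hs)).sdiff hfin).mono ?_
  rintro x ⟨hxm, hx⟩
  exact mem_iInter₂.2 fun j hj => by_contra fun hxj => hx (Set.mem_biUnion hj ⟨hxm, hxj⟩)

theorem exists_ultrafilter_le_cofinite_forall_mem {ι : Type*} [Nonempty ι] [Preorder ι]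
    [IsDirectedOrder ι] {A : ι → Set ℕ} (hinf : ∀ i, (A i).Infinite)
    (hA : ∀ ⦃i j⦄, i ≤ j → (A j \ A i).Finite) :
    ∃ U : Ultrafilter ℕ, (U : Filter ℕ) ≤ cofinite ∧ ∀ i, A i ∈ U := by
  have hmono : ∀ ⦃i j⦄, i ≤ j → cofinite ⊓ 𝓟 (A j) ≤ cofinite ⊓ 𝓟 (A i) := fun i j hij => by
    rw [← (hA hij).cofinite_inf_principal_sdiff, sdiff_sdiff_right_self]
    exact inf_le_inf_left _ (principal_mono.2 inter_subset_right)
  have hdir : Directed (· ≥ ·) fun i => cofinite ⊓ 𝓟 (A i) := fun i j =>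
    let ⟨k, hik, hjk⟩ := exists_ge_ge i j
    ⟨k, hmono hik, hmono hjk⟩
  have := iInf_neBot_of_directed' hdir fun i => (hinf i).cofinite_inf_principal_neBot
  obtain ⟨i⟩ := ‹Nonempty ι›
  refine ⟨Ultrafilter.of (⨅ i, cofinite ⊓ 𝓟 (A i)), ?_, fun i => ?_⟩
  · exact (Ultrafilter.of_le _).trans ((iInf_le _ i).trans inf_le_left)
  · exact (Ultrafilter.of_le _).trans ((iInf_le _ i).trans inf_le_right) (mem_principal_self _)

section Tower

variable {ι : Type*} [LinearOrder ι] [WellFoundedLT ι] (P : ι → Set ℕ → Prop)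

/-- `Classical.epsilon` gives junk when no suitable set exists; `tower_spec` shows one always does. -/
noncomputable def tower : ι → Set ℕ :=
  wellFounded_lt.fix fun i A => Classical.epsilon fun s : Set ℕ =>
    s.Infinite ∧ (∀ j (hj : j < i), (s \ A j hj).Finite) ∧ P i s

variable {P}

theorem tower_eq (i : ι) : tower P i = Classical.epsilon fun s : Set ℕ =>
    s.Infinite ∧ (∀ j < i, (s \ tower P j).Finite) ∧ P i s :=
  wellFounded_lt.fix_eq _ _

theorem tower_spec (hcount : ∀ i : ι, (Iio i).Countable)
    (hP : ∀ i C, C.Infinite → ∃ s ⊆ C, s.Infinite ∧ P i s) (i : ι) :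
    (tower P i).Infinite ∧ (∀ j < i, (tower P i \ tower P j).Finite) ∧ P i (tower P i) := by
  induction i using WellFoundedLT.induction with
  | _ i ih =>
  have hex : ∃ s : Set ℕ, s.Infinite ∧ (∀ j < i, (s \ tower P j).Finite) ∧ P i s := by
    have := (hcount i).to_subtype
    have hchain (j k : Iio i) (hjk : j ≤ k) : (tower P k \ tower P j).Finite := by
      rcases hjk.lt_or_eq with hjk | rfl
      exacts [(ih k k.2).2.1 j hjk, by simp]
    obtain ⟨C, hC, hCA⟩ := exists_infinite_forall_sdiff_finite_of_countable
      (Finset.infinite_biInter_of_sdiff_finite (A := fun j : Iio i => tower P j)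
        (fun j => (ih j j.2).1) hchain)
    obtain ⟨s, hsC, hs, hPs⟩ := hP i C hC
    exact ⟨s, hs, fun j hj => (hCA ⟨j, hj⟩).subset (sdiff_subset_sdiff_left hsC), hPs⟩
  rw [tower_eq]
  exact Classical.epsilon_spec hex

theorem tower_sdiff_finite (hcount : ∀ i : ι, (Iio i).Countable)
    (hP : ∀ i C, C.Infinite → ∃ s ⊆ C, s.Infinite ∧ P i s) {i j : ι} (hij : i ≤ j) :
    (tower P j \ tower P i).Finite := by
  rcases hij.lt_or_eq with hij | rfl
  exacts [(tower_spec hcount hP j).2.1 i hij, by simp]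

end Tower

universe u

theorem countable_Iio_toType_ord_aleph_one (i : (ℵ₁ : Cardinal.{u}).ord.ToType) :
    (Iio i).Countable := by
  rw [← le_aleph0_iff_set_countable, ← Order.lt_succ_iff, succ_aleph0]
  simpa using mk_Iio_lt i

theorem nonempty_toType_ord_aleph_one_equiv_nat_fun (ch : (𝔠 : Cardinal.{u}) = ℵ₁) :
    Nonempty ((ℵ₁ : Cardinal.{0}).ord.ToType ≃ (ℕ → ℕ)) := by
  have ch₀ : (𝔠 : Cardinal.{0}) = ℵ₁ := lift_injective.{u} (by simpa using ch)
  exact Cardinal.eq.1 (by simp [ch₀])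

/-- Under the continuum hypothesis there exists a P-point ultrafilter on `ℕ`. -/
theorem stmt_17 (ch : Cardinal.continuum = Cardinal.aleph 1) :
    ∃ U : Ultrafilter ℕ, IsPPoint U := by
  obtain ⟨e⟩ := nonempty_toType_ord_aleph_one_equiv_nat_fun ch
  have : Nonempty (ℵ₁ : Cardinal.{0}).ord.ToType := ⟨e.symm 0⟩
  have hcount := countable_Iio_toType_ord_aleph_one.{0}
  have hP (i) (C : Set ℕ) (hC : C.Infinite) := hC.exists_subset_constOrFiniteToOneOn (e i)
  have hA := tower_spec hcount hP
  obtain ⟨U, hU, hAU⟩ := exists_ultrafilter_le_cofinite_forall_mem (fun i => (hA i).1)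
    fun i j => tower_sdiff_finite hcount hP
  refine ⟨U, Ultrafilter.ne_pure_of_le_cofinite hU, fun f => ?_⟩
  obtain ⟨i, rfl⟩ := e.surjective f
  exact ⟨_, hAU i, (hA i).2.2⟩
end
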